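/- Let p be an odd prime with Pisano period l_p = p−1 and β(p) = 1, and let C = ⟨f(x)⟩ be the cyclic code of length p−1 over F_p generated by the Fibonacci polynomial f(x). Then the weight distribution of C is: A_0 = 1, A_{p−2} = (p−1)², A_{p−1} = 2(p−1), and A_w = 0 for all other weights w, where A_w denotes the number of codewords of C of Hamming weight w. -/

import Mathlib

open Polynomial

/-- The Fibonacci sequence over `ZMod p`: `F 0 = 0`, `F 1 = 1`, `F (n+2) = F (n+1) + F n`. -/
def fibMod (p : ℕ) : ℕ → ZMod p
  | 0 => 0
  | 1 => 1
  | n + 2 => fibMod p (n + 1) + fibMod p n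

/-- The Pisano period of `p`: the least `t > 0` with `F t = F 0 = 0` and `F (t+1) = F 1 = 1`. -/
noncomputable def pisano (p : ℕ) : ℕ :=
  sInf {t : ℕ | 0 < t ∧ fibMod p t = 0 ∧ fibMod p (t + 1) = 1}

/-- `β(p)`: the number of indices `0 ≤ i < l_p` with `F i = 0` in `ZMod p`. -/
noncomputable def betaP (p : ℕ) : ℕ :=
  ((Finset.range (pisano p)).filter fun i => fibMod p i = 0).card

/-- The Fibonacci polynomial `f(x) = ∑_{i=0}^{l_p - 1} F_i x^i` over `ZMod p`. -/
noncomputable def fibPoly (p : ℕ) : (ZMod p)[X] :=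
  ∑ i ∈ Finset.range (pisano p), C (fibMod p i) * X ^ i

/-- Cyclic shift of a vector of length `l`: the shift `v ↦ (v_{l-1}, v_0, …, v_{l-2})`,
which corresponds to multiplication by `x` modulo `x^l - 1` on coefficient vectors. -/
def cyclicShift (p l : ℕ) (v : Fin l → ZMod p) : Fin l → ZMod p :=
  fun i => v ⟨((i : ℕ) + (l - 1)) % l, Nat.mod_lt _ i.pos⟩

/-- The coefficient vector of length `l` of a polynomial. -/
def polyVec (p l : ℕ) (g : (ZMod p)[X]) : Fin l → ZMod p := fun i => g.coeff i

/-- The cyclic code of length `l` generated by `g`: the ideal generated by the image of `g`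
in `F_p[x]/(x^l - 1)`, identified with the subspace of `F_p^l` of coefficient vectors via
`a_0 + a_1 x + ⋯ + a_{l-1} x^{l-1} ↦ (a_0, …, a_{l-1})`; equivalently (since multiplication
by `x` is the cyclic shift), the `F_p`-span of all cyclic shifts of the coefficient vector
of `g`. -/
noncomputable def cyclicCode (p l : ℕ) (g : (ZMod p)[X]) :
    Submodule (ZMod p) (Fin l → ZMod p) :=
  Submodule.span (ZMod p) {w | ∃ k : ℕ, w = (cyclicShift p l)^[k] (polyVec p l g)}

/-- The cyclic code of length `l` generated by the Fibonacci polynomial `f(x)`. -/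
noncomputable def fibCode (p l : ℕ) : Submodule (ZMod p) (Fin l → ZMod p) :=
  cyclicCode p l (fibPoly p)

/-!
Since `l_p = p - 1` is a period of `F`, the cyclic shifts of `(F_i)_i` are the vectors
`(F_{i+m})_i`, and the addition formula `F_{m+i+1} = F_m F_i + F_{m+1} F_{i+1}` identifies the
code with the image of `(a, b) ↦ (a F_i + b F_{i+1})_i`. By d'Ocagne's identity
`F_i F_{j+1} - F_j F_{i+1} = ± F_{j-i}`, and `β(p) = 1` says `F_{j-i} ≠ 0` for `i < j < l_p`:
any two coordinates of this two-dimensional code are independent. So `(a, b) ↦ codeword` is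
injective and a nonzero codeword vanishes in at most one coordinate. Each coordinate vanishes
for exactly `p - 1` nonzero pairs `(a, b)`, giving `(p - 1)²` codewords of weight `p - 2`; the
other `p² - 1 - (p - 1)² = 2(p - 1)` nonzero codewords have full weight `p - 1`.
-/

open Finset Function

lemma hammingNorm_add_card_filter_eq_zero {ι M : Type*} [Fintype ι] [Zero M] [DecidableEq M]
    (x : ι → M) : hammingNorm x + #{i | x i = 0} = Fintype.card ι := by
  rw [hammingNorm, add_comm, card_filter_add_card_filter_not, card_univ]

lemma card_filter_mul_add_mul_eq_zero {K : Type*} [Field K] [Fintype K] [DecidableEq K]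
    {x y : K} (h : x ≠ 0 ∨ y ≠ 0) :
    #{ab : K × K | ab.1 * x + ab.2 * y = 0} = Fintype.card K := by
  have hline : ({ab : K × K | ab.1 * x + ab.2 * y = 0} : Finset _) =
      univ.image fun t => (t * y, -(t * x)) := by
    ext ⟨a, b⟩
    simp only [mem_filter, mem_univ, true_and, mem_image, Prod.mk.injEq]
    constructor
    · intro hab
      rcases h with hx | hy
      · refine ⟨-(b / x), ?_, by field_simp⟩
        field_simp
        linear_combination -hab
      · refine ⟨a / y, by field_simp, ?_⟩
        field_simp
        linear_combination -hab
    · rintro ⟨t, rfl, rfl⟩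
      ring
  rw [hline, card_image_of_injective _ ?_, card_univ]
  intro s t hst
  simp only [Prod.mk.injEq, neg_inj] at hst
  rcases h with hx | hy
  · exact mul_right_cancel₀ hx hst.2
  · exact mul_right_cancel₀ hy hst.1

section PairMap

variable {K ι : Type*} [CommRing K]

def pairMap (u v : ι → K) : K × K →ₗ[K] ι → K :=
  (LinearMap.toSpanSingleton K _ u).coprod (LinearMap.toSpanSingleton K _ v)

@[simp]
lemma pairMap_apply (u v : ι → K) (ab : K × K) (i : ι) :
    pairMap u v ab i = ab.1 * u i + ab.2 * v i := by
  simp [pairMap]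

lemma range_pairMap (u v : ι → K) :
    LinearMap.range (pairMap u v) = Submodule.span K {u, v} := by
  ext x
  simp [Submodule.mem_span_pair, pairMap]

variable [NoZeroDivisors K]

lemma eq_zero_of_mul_sub_mul_ne_zero {x₁ y₁ x₂ y₂ a b : K} (h : x₁ * y₂ - x₂ * y₁ ≠ 0)
    (h₁ : a * x₁ + b * y₁ = 0) (h₂ : a * x₂ + b * y₂ = 0) : a = 0 ∧ b = 0 := by
  refine ⟨(mul_eq_zero.mp ?_).resolve_right h, (mul_eq_zero.mp ?_).resolve_right h⟩
  · linear_combination y₂ * h₁ - y₁ * h₂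
  · linear_combination x₁ * h₂ - x₂ * h₁

variable {u v : ι → K}

lemma eq_of_pairMap_apply_eq_zero (hminor : ∀ i j, i ≠ j → u i * v j - u j * v i ≠ 0)
    {ab : K × K} (hab : ab ≠ 0) {i j : ι} (hi : pairMap u v ab i = 0)
    (hj : pairMap u v ab j = 0) : i = j := by
  refine by_contra fun hij => hab ?_
  rw [pairMap_apply] at hi hj
  obtain ⟨h₁, h₂⟩ := eq_zero_of_mul_sub_mul_ne_zero (hminor i j hij) hi hj
  exact Prod.ext h₁ h₂

variable [Fintype ι] [DecidableEq K]

lemma card_filter_pairMap_eq_zero_le_one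
    (hminor : ∀ i j, i ≠ j → u i * v j - u j * v i ≠ 0) {ab : K × K} (hab : ab ≠ 0) :
    #{i | pairMap u v ab i = 0} ≤ 1 :=
  card_le_one.mpr fun _ hi _ hj =>
    eq_of_pairMap_apply_eq_zero hminor hab (mem_filter.mp hi).2 (mem_filter.mp hj).2

lemma pairMap_injective (h2 : 1 < Fintype.card ι)
    (hminor : ∀ i j, i ≠ j → u i * v j - u j * v i ≠ 0) : Injective (pairMap u v) := by
  refine (injective_iff_map_eq_zero _).mpr fun ab hab => by_contra fun hne => ?_
  have := card_filter_pairMap_eq_zero_le_one hminor hne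
  simp only [hab, Pi.zero_apply, filter_true, card_univ] at this
  omega

lemma hammingNorm_pairMap (hminor : ∀ i j, i ≠ j → u i * v j - u j * v i ≠ 0)
    {ab : K × K} (hab : ab ≠ 0) :
    hammingNorm (pairMap u v ab) =
      if ∃ i, pairMap u v ab i = 0 then Fintype.card ι - 1 else Fintype.card ι := by
  have hsum := hammingNorm_add_card_filter_eq_zero (pairMap u v ab)
  have hle := card_filter_pairMap_eq_zero_le_one hminor hab
  split_ifs with hzero
  · obtain ⟨i, hi⟩ := hzero
    have : 0 < #{i | pairMap u v ab i = 0} := card_pos.mpr ⟨i, by simpa using hi⟩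
    omega
  · have : #{i | pairMap u v ab i = 0} = 0 := by simpa using hzero
    omega

end PairMap

section WeightDistribution

variable {K ι : Type*} [Field K] [Fintype K] [DecidableEq K] [Fintype ι] {u v : ι → K}

lemma ncard_setOf_mem_span_pair_hammingNorm_eq (h2 : 1 < Fintype.card ι)
    (hminor : ∀ i j, i ≠ j → u i * v j - u j * v i ≠ 0) (w : ℕ) :
    {x | x ∈ Submodule.span K {u, v} ∧ hammingNorm x = w}.ncard =
      #{ab : K × K | hammingNorm (pairMap u v ab) = w} := by
  have himage : {x | x ∈ Submodule.span K {u, v} ∧ hammingNorm x = w} =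
      pairMap u v '' {ab | hammingNorm (pairMap u v ab) = w} := by
    ext x
    simp only [← range_pairMap, LinearMap.mem_range, Set.mem_image]
    constructor
    · rintro ⟨⟨ab, rfl⟩, hw⟩
      exact ⟨ab, hw, rfl⟩
    · rintro ⟨ab, hw, rfl⟩
      exact ⟨⟨ab, rfl⟩, hw⟩
  rw [himage, Set.ncard_image_of_injective _ (pairMap_injective h2 hminor),
    ← Set.ncard_coe_finset]
  simp

lemma card_hammingNorm_pairMap_eq_zero (h2 : 1 < Fintype.card ι)
    (hminor : ∀ i j, i ≠ j → u i * v j - u j * v i ≠ 0) :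
    #{ab : K × K | hammingNorm (pairMap u v ab) = 0} = 1 := by
  simp [hammingNorm_eq_zero, map_eq_zero_iff _ (pairMap_injective h2 hminor), filter_eq']

lemma card_filter_ne_zero_pairMap_apply_eq_zero (h2 : 1 < Fintype.card ι)
    (hminor : ∀ i j, i ≠ j → u i * v j - u j * v i ≠ 0) (i : ι) :
    #{ab : K × K | ab ≠ 0 ∧ pairMap u v ab i = 0} = Fintype.card K - 1 := by
  obtain ⟨j, hji⟩ := Fintype.exists_ne_of_one_lt_card h2 i
  have hcol : u i ≠ 0 ∨ v i ≠ 0 := by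
    by_contra! h
    exact hminor i j hji.symm (by simp [h])
  have herase : ({ab : K × K | ab ≠ 0 ∧ pairMap u v ab i = 0} : Finset _) =
      ({ab : K × K | ab.1 * u i + ab.2 * v i = 0} : Finset _).erase 0 := by
    ext
    simp
  rw [herase, card_erase_of_mem (by simp), card_filter_mul_add_mul_eq_zero hcol]

lemma card_hammingNorm_pairMap_eq_card_sub_one (h2 : 1 < Fintype.card ι)
    (hminor : ∀ i j, i ≠ j → u i * v j - u j * v i ≠ 0) :
    #{ab : K × K | hammingNorm (pairMap u v ab) = Fintype.card ι - 1} =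
      Fintype.card ι * (Fintype.card K - 1) := by
  have hunion : ({ab : K × K | hammingNorm (pairMap u v ab) = Fintype.card ι - 1} : Finset _) =
      univ.biUnion fun i => {ab | ab ≠ 0 ∧ pairMap u v ab i = 0} := by
    ext ab
    simp only [mem_filter, mem_univ, true_and, mem_biUnion]
    rcases eq_or_ne ab 0 with rfl | hab
    · simp only [map_zero, hammingNorm_zero, ne_eq, not_true_eq_false, false_and, exists_false,
        iff_false]
      omega
    · simp only [ne_eq, hab, not_false_eq_true, true_and, hammingNorm_pairMap hminor hab]
      split_ifs with h
      · exact iff_of_true rfl h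
      · exact iff_of_false (by omega) h
  rw [hunion, card_biUnion, sum_congr rfl fun i _ =>
    card_filter_ne_zero_pairMap_apply_eq_zero h2 hminor i, sum_const, card_univ, smul_eq_mul]
  rintro i - j - hij
  simp only [Function.onFun, disjoint_left, mem_filter, mem_univ, true_and]
  rintro ab ⟨hab, hi⟩ ⟨-, hj⟩
  exact hij (eq_of_pairMap_apply_eq_zero hminor hab hi hj)

lemma card_hammingNorm_pairMap_eq_card_add (h2 : 1 < Fintype.card ι)
    (hminor : ∀ i j, i ≠ j → u i * v j - u j * v i ≠ 0) :
    #{ab : K × K | hammingNorm (pairMap u v ab) = Fintype.card ι} +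
      Fintype.card ι * (Fintype.card K - 1) = Fintype.card K ^ 2 - 1 := by
  have hnonzero : ({ab : K × K | hammingNorm (pairMap u v ab) = Fintype.card ι ∨
      hammingNorm (pairMap u v ab) = Fintype.card ι - 1} : Finset _) = univ.erase 0 := by
    ext ab
    rcases eq_or_ne ab 0 with rfl | hab
    · simp only [mem_filter, mem_univ, true_and, map_zero, hammingNorm_zero, mem_erase,
        ne_eq, not_true_eq_false, false_and, iff_false]
      omega
    · simp only [mem_filter, mem_univ, true_and, mem_erase, hab, ne_eq, not_false_eq_true,
        hammingNorm_pairMap hminor hab]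
      split_ifs <;> simp
  rw [← card_hammingNorm_pairMap_eq_card_sub_one h2 hminor, ← card_union_of_disjoint
    (disjoint_filter.mpr fun _ _ h h' => by omega), ← filter_or, hnonzero,
    card_erase_of_mem (mem_univ _), card_univ, Fintype.card_prod, sq]

lemma card_hammingNorm_pairMap_eq_of_ne (hminor : ∀ i j, i ≠ j → u i * v j - u j * v i ≠ 0)
    {w : ℕ} (h0 : w ≠ 0) (h1 : w ≠ Fintype.card ι - 1) (hn : w ≠ Fintype.card ι) :
    #{ab : K × K | hammingNorm (pairMap u v ab) = w} = 0 := by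
  rw [card_eq_zero, filter_eq_empty_iff]
  intro ab _ hw
  rcases eq_or_ne ab 0 with rfl | hab
  · rw [map_zero, hammingNorm_zero] at hw
    exact h0 hw.symm
  · rw [hammingNorm_pairMap hminor hab] at hw
    split_ifs at hw <;> omega

end WeightDistribution

section Fibonacci

variable {p : ℕ}

lemma fibMod_eq_fib (p n : ℕ) : fibMod p n = (Nat.fib n : ZMod p) := by
  induction n using Nat.twoStepInduction with
  | zero => simp [fibMod]
  | one => simp [fibMod]
  | more n ih₁ ih₂ => simp [fibMod, ih₁, ih₂, Nat.fib_add_two, add_comm]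

lemma fibMod_add (p m n : ℕ) :
    fibMod p (m + n + 1) = fibMod p m * fibMod p n + fibMod p (m + 1) * fibMod p (n + 1) := by
  simp only [fibMod_eq_fib, Nat.fib_add, Nat.cast_add, Nat.cast_mul]

lemma fibMod_mul_sub_mul (p i m : ℕ) :
    fibMod p i * fibMod p (i + m + 1) - fibMod p (i + m) * fibMod p (i + 1) =
      (-1) ^ (i + 1) * fibMod p m := by
  induction i with
  | zero => simp [fibMod]
  | succ i ih =>
    rw [show i + 1 + m + 1 = i + m + 2 by omega, show i + 1 + m = i + m + 1 by omega]
    simp only [fibMod, pow_succ] at ih ⊢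
    linear_combination -ih

lemma fibMod_periodic {l : ℕ} (h₀ : fibMod p l = 0) (h₁ : fibMod p (l + 1) = 1) :
    Periodic (fibMod p) l := by
  rintro (_ | n)
  · simpa [fibMod] using h₀
  · rw [add_right_comm, add_comm n, fibMod_add, h₀, h₁]
    ring

lemma fibMod_pisano (h : pisano p ≠ 0) :
    fibMod p (pisano p) = 0 ∧ fibMod p (pisano p + 1) = 1 :=
  (Nat.sInf_mem (Nat.nonempty_of_pos_sInf (Nat.pos_of_ne_zero h))).2

lemma one_lt_pisano [Nontrivial (ZMod p)] (h : pisano p ≠ 0) : 1 < pisano p := by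
  by_contra! hle
  have h₁ : pisano p = 1 := by omega
  have := (fibMod_pisano h).1
  rw [h₁] at this
  exact one_ne_zero this

lemma fibMod_ne_zero_of_betaP_eq_one (hb : betaP p = 1) {i : ℕ} (hi₀ : i ≠ 0)
    (hi : i < pisano p) : fibMod p i ≠ 0 := by
  intro hzero
  have hmem : ∀ j, j < pisano p → fibMod p j = 0 →
      j ∈ (range (pisano p)).filter fun k => fibMod p k = 0 :=
    fun j hj hj₀ => mem_filter.mpr ⟨mem_range.mpr hj, hj₀⟩
  exact hi₀ (card_le_one.mp hb.le i (hmem i hi hzero) 0 (hmem 0 (by omega) rfl))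

lemma fibMod_mul_sub_mul_ne_zero [Fact p.Prime] (hb : betaP p = 1) {i j : ℕ} (hij : i ≠ j)
    (hi : i < pisano p) (hj : j < pisano p) :
    fibMod p i * fibMod p (j + 1) - fibMod p j * fibMod p (i + 1) ≠ 0 := by
  wlog hlt : i < j generalizing i j
  · rw [← neg_sub]
    exact neg_ne_zero.mpr (this hij.symm hj hi (by omega))
  obtain ⟨m, rfl⟩ := Nat.exists_eq_add_of_lt hlt
  have hdet := fibMod_mul_sub_mul p i (m + 1)
  rw [← add_assoc] at hdet
  rw [hdet]
  exact mul_ne_zero (pow_ne_zero _ (neg_ne_zero.mpr one_ne_zero))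
    (fibMod_ne_zero_of_betaP_eq_one hb (by omega) (by omega))

lemma polyVec_fibPoly (p : ℕ) :
    polyVec p (pisano p) (fibPoly p) = fun i : Fin (pisano p) => fibMod p i := by
  funext i
  simp [polyVec, fibPoly]

lemma cyclicShift_iterate_of_periodic {l : ℕ} {g : ℕ → ZMod p} (hg : Periodic g l) (k : ℕ) :
    (cyclicShift p l)^[k] (fun i : Fin l => g i) = fun i : Fin l => g (i + k * (l - 1)) := by
  induction k with
  | zero => simp
  | succ k ih =>
    rw [iterate_succ_apply', ih]
    funext i
    simp only [cyclicShift]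
    rw [(hg.add_const _).map_mod_nat]
    ring_nf

lemma fibCode_eq_span (h : pisano p ≠ 0) :
    fibCode p (pisano p) =
      Submodule.span (ZMod p)
        {fun i : Fin (pisano p) => fibMod p i, fun i : Fin (pisano p) => fibMod p (i + 1)} := by
  set l := pisano p
  have hper : Periodic (fibMod p) l := fibMod_periodic (fibMod_pisano h).1 (fibMod_pisano h).2
  have hshift := cyclicShift_iterate_of_periodic hper
  apply le_antisymm
  · refine Submodule.span_le.mpr ?_
    rintro _ ⟨k, rfl⟩
    rw [polyVec_fibPoly, hshift]
    set c := k * (l - 1) + (l - 1)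
    refine Submodule.mem_span_pair.mpr ⟨fibMod p c, fibMod p (c + 1), funext fun i => ?_⟩
    simp only [Pi.add_apply, Pi.smul_apply, smul_eq_mul]
    rw [← fibMod_add, ← hper (i + k * (l - 1))]
    congr 1
    omega
  · rw [Submodule.span_le, Set.insert_subset_iff, Set.singleton_subset_iff]
    refine ⟨Submodule.subset_span ⟨0, (polyVec_fibPoly p).symm⟩,
      Submodule.subset_span ⟨l - 1, ?_⟩⟩
    rw [polyVec_fibPoly, hshift]
    funext i
    generalize (i : ℕ) = x
    obtain ⟨n, hn⟩ : ∃ n, l = n + 1 := ⟨l - 1, by omega⟩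
    rw [← hper (x + (l - 1) * (l - 1)), ← (hper.nat_mul n) (x + 1)]
    congr 1
    rw [hn, Nat.cast_id, Nat.add_sub_cancel]
    ring

end Fibonacci

theorem fibCode_weight_distribution_beta_one_general (p : ℕ) [Fact p.Prime]
    (hl : pisano p = p - 1) (hb : betaP p = 1) :
    Set.ncard {v | v ∈ fibCode p (p - 1) ∧ hammingNorm v = 0} = 1 ∧
      Set.ncard {v | v ∈ fibCode p (p - 1) ∧ hammingNorm v = p - 2} = (p - 1) ^ 2 ∧
      Set.ncard {v | v ∈ fibCode p (p - 1) ∧ hammingNorm v = p - 1} = 2 * (p - 1) ∧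
      ∀ w : ℕ, w ≠ 0 → w ≠ p - 2 → w ≠ p - 1 →
        Set.ncard {v | v ∈ fibCode p (p - 1) ∧ hammingNorm v = w} = 0 := by
  have hl₀ : pisano p ≠ 0 := by
    have := (Fact.out : p.Prime).two_le
    omega
  have h2 : 1 < Fintype.card (Fin (pisano p)) := by simpa using one_lt_pisano hl₀
  have hminor (i j : Fin (pisano p)) (hij : i ≠ j) :
      fibMod p i * fibMod p (j + 1) - fibMod p j * fibMod p (i + 1) ≠ 0 :=
    fibMod_mul_sub_mul_ne_zero hb (Fin.val_ne_of_ne hij) i.2 j.2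
  have hsq : p ^ 2 - 1 = (p - 1) * (p - 1) + 2 * (p - 1) := by
    obtain ⟨n, rfl⟩ := Nat.exists_eq_add_of_lt (Fact.out : p.Prime).pos
    simp only [zero_add, Nat.add_sub_cancel]
    ring_nf
    omega
  have hweight₁ := card_hammingNorm_pairMap_eq_card_sub_one (K := ZMod p) h2 hminor
  have hweight₂ := card_hammingNorm_pairMap_eq_card_add (K := ZMod p) h2 hminor
  rw [Fintype.card_fin, ZMod.card, ← hl] at hweight₁
  rw [Fintype.card_fin, ZMod.card, hsq, ← hl] at hweight₂
  rw [show p - 2 = pisano p - 1 by omega, ← hl]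
  simp only [fibCode_eq_span hl₀, ncard_setOf_mem_span_pair_hammingNorm_eq h2 hminor]
  refine ⟨card_hammingNorm_pairMap_eq_zero h2 hminor, by rw [hweight₁, sq], by omega,
    fun w h₀ h₁ h₂ => card_hammingNorm_pairMap_eq_of_ne hminor h₀ ?_ ?_⟩ <;>
  rwa [Fintype.card_fin]

/-- Weight distribution for `l_p = p - 1`, `β(p) = 1`:
`A_0 = 1`, `A_{p-2} = (p-1)²`, `A_{p-1} = 2(p-1)`, and `A_w = 0` otherwise. -/
theorem fibCode_weight_distribution_beta_one (p : ℕ) [Fact p.Prime] (hodd : Odd p)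
    (hl : pisano p = p - 1) (hb : betaP p = 1) :
    Set.ncard {v | v ∈ fibCode p (p - 1) ∧ hammingNorm v = 0} = 1 ∧
      Set.ncard {v | v ∈ fibCode p (p - 1) ∧ hammingNorm v = p - 2} = (p - 1) ^ 2 ∧
      Set.ncard {v | v ∈ fibCode p (p - 1) ∧ hammingNorm v = p - 1} = 2 * (p - 1) ∧
      ∀ w : ℕ, w ≠ 0 → w ≠ p - 2 → w ≠ p - 1 →
        Set.ncard {v | v ∈ fibCode p (p - 1) ∧ hammingNorm v = w} = 0 :=
  fibCode_weight_distribution_beta_one_general p hl hb
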